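/- arXiv:2501.06975 — 6 statements merged into one kernel-verified Lean document; each statement's English description precedes it below -/
import Mathlib

section
/- Let k ∈ ℕ and let f = (f_1, …, f_k) with f_i : ℝ → ℝ ∪ {+∞} be in duality position, i.e., H(x; f) = Σ_{i=1}^k f_i(x_i) − Σ_{1≤i<j≤k} x_i x_j ≥ 0 for all x ∈ ℝ^k. Then the zero set Γ_f = {x ∈ ℝ^k : H(x; f) = 0} is monotone: for all a, b ∈ Γ_f and all indices i, j ∈ {1, …, k}, (b_i − a_i)(b_j − a_j) ≥ 0. -/
/-!
Passing from `a, b` to their pointwise maximum `a ⊔ b` and minimum `a ⊓ b` only permutes the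
values in each coordinate, so `Σ_i f_i` has the same total on both pairs, while `c` grows by
`Σ_{i<j} ((b_i - a_i)(b_j - a_j))⁻`. Duality at `a ⊔ b` and `a ⊓ b`, together with
`H(a; f) = H(b; f) = 0`, forces this growth to be `≤ 0`, so every product is nonnegative.
-/

open Finset

/-- The pairwise-product cost `c(x) = Σ_{i<j} x_i x_j`. -/
def cCost {k : ℕ} (x : Fin k → ℝ) : ℝ :=
  ∑ p ∈ Finset.univ.filter (fun p : Fin k × Fin k => p.1 < p.2), x p.1 * x p.2

lemma sup_mul_sup_add_inf_mul_inf {α : Type*} [CommRing α] [LinearOrder α]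
    [IsStrictOrderedRing α] (x y z w : α) :
    (x ⊔ y) * (z ⊔ w) + (x ⊓ y) * (z ⊓ w) = x * z + y * w + ((y - x) * (w - z))⁻ := by
  rcases le_total x y with hxy | hxy <;> rcases le_total z w with hzw | hzw
  · rw [sup_of_le_right hxy, inf_of_le_left hxy, sup_of_le_right hzw, inf_of_le_left hzw,
      negPart_of_nonneg (mul_nonneg (sub_nonneg.2 hxy) (sub_nonneg.2 hzw))]
    ring
  · rw [sup_of_le_right hxy, inf_of_le_left hxy, sup_of_le_left hzw, inf_of_le_right hzw,
      negPart_of_nonpos (mul_nonpos_of_nonneg_of_nonpos (sub_nonneg.2 hxy) (sub_nonpos.2 hzw))]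
    ring
  · rw [sup_of_le_left hxy, inf_of_le_right hxy, sup_of_le_right hzw, inf_of_le_left hzw,
      negPart_of_nonpos (mul_nonpos_of_nonpos_of_nonneg (sub_nonpos.2 hxy) (sub_nonneg.2 hzw))]
    ring
  · rw [sup_of_le_left hxy, inf_of_le_right hxy, sup_of_le_left hzw, inf_of_le_right hzw,
      negPart_of_nonneg (mul_nonneg_of_nonpos_of_nonpos (sub_nonpos.2 hxy) (sub_nonpos.2 hzw))]
    ring

lemma sum_sup_add_sum_inf {ι α M : Type*} [Fintype ι] [LinearOrder α] [AddCommMonoid M]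
    (g : ι → α → M) (a b : ι → α) :
    ∑ i, g i ((a ⊔ b) i) + ∑ i, g i ((a ⊓ b) i) = ∑ i, g i (a i) + ∑ i, g i (b i) := by
  simp only [← sum_add_distrib, Pi.sup_apply, Pi.inf_apply]
  refine sum_congr rfl fun i _ => ?_
  rcases le_total (a i) (b i) with h | h
  · rw [sup_of_le_right h, inf_of_le_left h, add_comm]
  · rw [sup_of_le_left h, inf_of_le_right h]

lemma cCost_sup_add_cCost_inf {k : ℕ} (a b : Fin k → ℝ) :
    cCost (a ⊔ b) + cCost (a ⊓ b) = cCost a + cCost b +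
      ∑ p ∈ univ.filter (fun p : Fin k × Fin k => p.1 < p.2),
        ((b p.1 - a p.1) * (b p.2 - a p.2))⁻ := by
  simp only [cCost, ← sum_add_distrib, Pi.sup_apply, Pi.inf_apply, sup_mul_sup_add_inf_mul_inf]

lemma mul_sub_nonneg_of_cCost_sup_add_cCost_inf_le {k : ℕ} {a b : Fin k → ℝ}
    (h : cCost (a ⊔ b) + cCost (a ⊓ b) ≤ cCost a + cCost b) (i j : Fin k) :
    0 ≤ (b i - a i) * (b j - a j) := by
  have hpairs : ∀ p ∈ univ.filter (fun p : Fin k × Fin k => p.1 < p.2),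
      0 ≤ (b p.1 - a p.1) * (b p.2 - a p.2) := by
    have hsum : ∑ p ∈ univ.filter (fun p : Fin k × Fin k => p.1 < p.2),
        ((b p.1 - a p.1) * (b p.2 - a p.2))⁻ ≤ 0 := by
      linarith [cCost_sup_add_cCost_inf a b]
    intro p hp
    rw [← negPart_nonpos]
    exact (sum_eq_zero_iff_of_nonneg (fun q _ => negPart_nonneg _)).1
      (le_antisymm hsum (sum_nonneg fun q _ => negPart_nonneg _)) p hp |>.le
  rcases lt_trichotomy i j with hij | rfl | hij
  · exact hpairs (i, j) (by simpa using hij)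
  · exact mul_self_nonneg _
  · exact mul_comm (b j - a j) _ ▸ hpairs (j, i) (by simpa using hij)

theorem zero_set_monotone_general (k : ℕ) (f : Fin k → ℝ → EReal)
    (hdual : ∀ x : Fin k → ℝ, ((cCost x : ℝ) : EReal) ≤ ∑ i, f i (x i))
    (a b : Fin k → ℝ)
    (ha : ∑ i, f i (a i) = ((cCost a : ℝ) : EReal))
    (hb : ∑ i, f i (b i) = ((cCost b : ℝ) : EReal))
    (i j : Fin k) :
    0 ≤ (b i - a i) * (b j - a j) := by
  refine mul_sub_nonneg_of_cCost_sup_add_cCost_inf_le ?_ i j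
  have : ((cCost (a ⊔ b) + cCost (a ⊓ b) : ℝ) : EReal) ≤ ((cCost a + cCost b : ℝ) : EReal) :=
    calc ((cCost (a ⊔ b) + cCost (a ⊓ b) : ℝ) : EReal)
        ≤ ∑ m, f m ((a ⊔ b) m) + ∑ m, f m ((a ⊓ b) m) := by
          rw [EReal.coe_add]; exact add_le_add (hdual _) (hdual _)
      _ = ∑ m, f m (a m) + ∑ m, f m (b m) := sum_sup_add_sum_inf f a b
      _ = ((cCost a + cCost b : ℝ) : EReal) := by rw [ha, hb, EReal.coe_add]
  exact_mod_cast this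

/-- If the tuple `f = (f_1, …, f_k)` of `ℝ ∪ {+∞}`-valued functions is in
duality position, i.e. `Σ_i f_i(x_i) ≥ c(x)` for all `x`, then the zero set
`Γ_f = {x | Σ_i f_i(x_i) = c(x)}` is monotone. -/
theorem zero_set_monotone (k : ℕ) (f : Fin k → ℝ → EReal)
    (hbot : ∀ i t, f i t ≠ ⊥)
    (hdual : ∀ x : Fin k → ℝ, ((cCost x : ℝ) : EReal) ≤ ∑ i, f i (x i))
    (a b : Fin k → ℝ)
    (ha : ∑ i, f i (a i) = ((cCost a : ℝ) : EReal))
    (hb : ∑ i, f i (b i) = ((cCost b : ℝ) : EReal))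
    (i j : Fin k) :
    0 ≤ (b i - a i) * (b j - a j) :=
  zero_set_monotone_general k f hdual a b ha hb i j
end

section
/- Let k ≥ 2 and, for each pair i < j in {1, …, k}, let Γ_{ij} : ℝ → ℝ be a continuous strictly increasing bijection; set Γ_{ji} = Γ_{ij}⁻¹ and y_{ij} = Γ_{ij}(0). Define f_i(x_i) = Σ_{j=1}^{i−1} ∫_{y_{ji}}^{x_i} Γ_{ij}(u) du + Σ_{j=i+1}^{k} ∫_0^{x_i} Γ_{ij}(u) du. Then Σ_{i=1}^k f_i(x_i) ≥ Σ_{1≤i<j≤k} x_i x_j for all x = (x_1, …, x_k) ∈ ℝ^k, with equality if and only if x_j = Γ_{ij}(x_i) for all pairs i < j. -/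
/-!
Each pair `i < j` contributes a two-variable Young inequality
`x_i x_j ≤ ∫_0^{x_i} Γ_ij + ∫_{Γ_ij 0}^{x_j} Γ_ji`, with equality iff `x_j = Γ_ij x_i`, and
grouping these integrals by their upper limit gives `Σ_i f_i(x_i)`. In Young's inequality for
`φ` and its inverse `ψ`, the gap `m a` at `b = φ a` satisfies `|m t - m s| ≤ |t - s| |φ t - φ s|`
(a monotone integral lies between its two endpoint rectangles), so `m' = 0` and `m ≡ m 0 = 0`;
for other `b` the gap is then `∫_{φ a}^b (ψ u - a) du > 0`.
-/

open Finset intervalIntegral Filter Topology Asymptotics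

theorem hasDerivAt_zero_of_abs_sub_le_mul {m g : ℝ → ℝ} {x : ℝ} (hg : ContinuousAt g x)
    (h : ∀ y, |m y - m x| ≤ |y - x| * |g y - g x|) : HasDerivAt m 0 x := by
  rw [hasDerivAt_iff_isLittleO]
  have hg' : (fun y => g y - g x) =o[𝓝 x] (fun _ => (1 : ℝ)) :=
    (isLittleO_one_iff ℝ).mpr (by simpa using hg.tendsto.sub_const (g x))
  have hprod : (fun y => (y - x) * (g y - g x)) =o[𝓝 x] fun y => y - x := by
    simpa using (isBigO_refl (fun y => y - x) (𝓝 x)).mul_isLittleO hg'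
  refine (IsBigO.of_bound 1 (Eventually.of_forall fun y => ?_)).trans_isLittleO hprod
  simpa [abs_mul] using h y

theorem Monotone.sub_mul_le_integral {φ : ℝ → ℝ} (hφ : Monotone φ) {s t : ℝ} (hst : s ≤ t) :
    (t - s) * φ s ≤ ∫ u in s..t, φ u := by
  simpa using integral_mono_on hst intervalIntegrable_const
    (hφ.intervalIntegrable (μ := MeasureTheory.volume)) fun u hu => hφ hu.1

theorem Monotone.integral_le_sub_mul {φ : ℝ → ℝ} (hφ : Monotone φ) {s t : ℝ} (hst : s ≤ t) :
    ∫ u in s..t, φ u ≤ (t - s) * φ t := by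
  simpa using integral_mono_on hst (hφ.intervalIntegrable (μ := MeasureTheory.volume))
    intervalIntegrable_const fun u hu => hφ hu.2

theorem StrictMono.integral_sub_apply_pos {ψ : ℝ → ℝ} (hψ : StrictMono ψ) {b c : ℝ} (hbc : b ≠ c) :
    0 < ∫ u in c..b, (ψ u - ψ c) := by
  rcases hbc.lt_or_gt with hlt | hgt
  · rw [integral_symm, ← intervalIntegral.integral_neg]
    simp only [neg_sub]
    exact intervalIntegral_pos_of_pos_on
      (intervalIntegrable_const.sub hψ.monotone.intervalIntegrable)
      (fun u hu => sub_pos.mpr (hψ hu.2)) hlt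
  · exact intervalIntegral_pos_of_pos_on
      (hψ.monotone.intervalIntegrable.sub intervalIntegrable_const)
      (fun u hu => sub_pos.mpr (hψ hu.1)) hgt

noncomputable def youngGap (φ ψ : ℝ → ℝ) (a b : ℝ) : ℝ :=
  (∫ u in (0 : ℝ)..a, φ u) + (∫ u in φ 0..b, ψ u) - a * b

section YoungGap

variable {φ ψ : ℝ → ℝ}

theorem abs_youngGap_sub_le (hφ : Monotone φ) (hψ : Monotone ψ) (hinv : Function.LeftInverse ψ φ)
    (s t : ℝ) :
    |youngGap φ ψ t (φ t) - youngGap φ ψ s (φ s)| ≤ |t - s| * |φ t - φ s| := by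
  wlog hst : s ≤ t generalizing s t
  · rw [abs_sub_comm, abs_sub_comm t, abs_sub_comm (φ t)]
    exact this t s (le_of_not_ge hst)
  have hφst : φ s ≤ φ t := hφ hst
  have hsplit : youngGap φ ψ t (φ t) - youngGap φ ψ s (φ s) =
      (∫ u in s..t, φ u) + (∫ u in φ s..φ t, ψ u) - (t * φ t - s * φ s) := by
    have hφ0 := integral_add_adjacent_intervals (hφ.intervalIntegrable (a := 0) (b := s))
      (hφ.intervalIntegrable (b := t)) (μ := MeasureTheory.volume)
    have hψ0 := integral_add_adjacent_intervals (hψ.intervalIntegrable (a := φ 0) (b := φ s))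
      (hψ.intervalIntegrable (b := φ t)) (μ := MeasureTheory.volume)
    simp only [youngGap]
    linarith
  have hψs : (φ t - φ s) * s ≤ ∫ u in φ s..φ t, ψ u := by
    simpa only [hinv s] using hψ.sub_mul_le_integral hφst
  have hψt : ∫ u in φ s..φ t, ψ u ≤ (φ t - φ s) * t := by
    simpa only [hinv t] using hψ.integral_le_sub_mul hφst
  rw [hsplit, abs_of_nonneg (sub_nonneg.mpr hst), abs_of_nonneg (sub_nonneg.mpr hφst), abs_le]
  constructor <;> nlinarith [hφ.sub_mul_le_integral hst, hφ.integral_le_sub_mul hst]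

theorem youngGap_apply_self (hφc : Continuous φ) (hφ : Monotone φ) (hψ : Monotone ψ)
    (hinv : Function.LeftInverse ψ φ) (a : ℝ) : youngGap φ ψ a (φ a) = 0 := by
  have hderiv (x : ℝ) : HasDerivAt (fun a => youngGap φ ψ a (φ a)) 0 x :=
    hasDerivAt_zero_of_abs_sub_le_mul hφc.continuousAt (abs_youngGap_sub_le hφ hψ hinv x)
  rw [is_const_of_deriv_eq_zero (fun x => (hderiv x).differentiableAt) (fun x => (hderiv x).deriv)
    a 0]
  simp [youngGap]

theorem youngGap_eq_integral (hφc : Continuous φ) (hφ : Monotone φ) (hψ : Monotone ψ)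
    (hinv : Function.LeftInverse ψ φ) (a b : ℝ) :
    youngGap φ ψ a b = ∫ u in φ a..b, (ψ u - ψ (φ a)) := by
  have hself := youngGap_apply_self hφc hφ hψ hinv a
  have hadd := integral_add_adjacent_intervals (hψ.intervalIntegrable (a := φ 0) (b := φ a))
    (hψ.intervalIntegrable (b := b)) (μ := MeasureTheory.volume)
  rw [integral_sub hψ.intervalIntegrable intervalIntegrable_const,
    intervalIntegral.integral_const, smul_eq_mul, hinv a]
  simp only [youngGap] at hself ⊢
  linarith

theorem youngGap_nonneg_and_eq_zero_iff (hφc : Continuous φ) (hφ : Monotone φ)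
    (hψ : StrictMono ψ) (hinv : Function.LeftInverse ψ φ) (a b : ℝ) :
    0 ≤ youngGap φ ψ a b ∧ (youngGap φ ψ a b = 0 ↔ b = φ a) := by
  rw [youngGap_eq_integral hφc hφ hψ.monotone hinv]
  rcases eq_or_ne b (φ a) with rfl | hne
  · simp
  · have hpos := hψ.integral_sub_apply_pos hne
    exact ⟨hpos.le, iff_of_false hpos.ne' hne⟩

end YoungGap

theorem sum_filter_lt_pairs_eq_sum_add {ι M : Type*} [Fintype ι] [LinearOrder ι] [AddCommMonoid M]
    (g h : ι → ι → M) :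
    ∑ p ∈ univ.filter (fun p : ι × ι => p.1 < p.2), (g p.1 p.2 + h p.1 p.2) =
      ∑ i, ((∑ j ∈ univ.filter (· < i), g j i) + ∑ j ∈ univ.filter (i < ·), h i j) := by
  rw [sum_add_distrib, sum_add_distrib,
    sum_finset_product_right' _ univ (fun i => univ.filter (· < i)) (by simp),
    sum_finset_product' _ univ (fun i => univ.filter (i < ·)) (by simp)]

theorem multi_young_inequality_general (k : ℕ)
    (Γ : Fin k → Fin k → ℝ → ℝ)
    (hcont : ∀ i j : Fin k, i < j → Continuous (Γ i j))
    (hmono : ∀ i j : Fin k, i < j → StrictMono (Γ i j))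
    (hinv₁ : ∀ i j : Fin k, i < j → Function.LeftInverse (Γ j i) (Γ i j))
    (hinv₂ : ∀ i j : Fin k, i < j → Function.RightInverse (Γ j i) (Γ i j))
    (f : Fin k → ℝ → ℝ)
    (hf : ∀ (i : Fin k) (t : ℝ),
      f i t = (∑ j ∈ Finset.univ.filter (fun j : Fin k => j < i),
                ∫ u in (Γ j i 0)..t, Γ i j u) +
              ∑ j ∈ Finset.univ.filter (fun j : Fin k => i < j),
                ∫ u in (0 : ℝ)..t, Γ i j u) :
    ∀ x : Fin k → ℝ,
      cCost x ≤ ∑ i, f i (x i) ∧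
      ((∑ i, f i (x i)) = cCost x ↔ ∀ i j : Fin k, i < j → x j = Γ i j (x i)) := by
  intro x
  set P := univ.filter (fun p : Fin k × Fin k => p.1 < p.2)
  set gap : Fin k × Fin k → ℝ := fun p => youngGap (Γ p.1 p.2) (Γ p.2 p.1) (x p.1) (x p.2)
  have hgap (p) (hp : p ∈ P) : 0 ≤ gap p ∧ (gap p = 0 ↔ x p.2 = Γ p.1 p.2 (x p.1)) := by
    have hlt : p.1 < p.2 := (mem_filter.mp hp).2
    have hinv_mono : StrictMono (Γ p.2 p.1) := fun u v huv =>
      (hmono _ _ hlt).lt_iff_lt.mp (by rwa [hinv₂ _ _ hlt u, hinv₂ _ _ hlt v])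
    exact youngGap_nonneg_and_eq_zero_iff (hcont _ _ hlt) (hmono _ _ hlt).monotone hinv_mono
      (hinv₁ _ _ hlt) _ _
  have hsum : ∑ i, f i (x i) = cCost x + ∑ p ∈ P, gap p := by
    rw [cCost, ← sum_add_distrib]
    simp only [gap, youngGap, add_sub_cancel, add_comm (∫ u in (0 : ℝ)..x _, _)]
    rw [sum_filter_lt_pairs_eq_sum_add (fun j i => ∫ u in Γ j i 0..x i, Γ i j u)
      (fun i j => ∫ u in (0 : ℝ)..x i, Γ i j u)]
    simp only [hf]
  have hgap_sum_zero : ∑ p ∈ P, gap p = 0 ↔ ∀ p ∈ P, gap p = 0 :=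
    sum_eq_zero_iff_of_nonneg fun p hp => (hgap p hp).1
  refine ⟨hsum ▸ le_add_of_nonneg_right (sum_nonneg fun p hp => (hgap p hp).1), ?_⟩
  rw [hsum, add_eq_left, hgap_sum_zero]
  exact ⟨fun h i j hij => ((hgap (i, j) (by simpa [P])).2).mp (h _ (by simpa [P])),
    fun h p hp => ((hgap p hp).2).mpr (h _ _ (mem_filter.mp hp).2)⟩

/-- Given, for each pair `i < j`, a continuous strictly increasing
bijection `Γ i j : ℝ → ℝ` with `Γ j i = (Γ i j)⁻¹`, the potentials
`f_i(x_i) = Σ_{j<i} ∫_{Γ j i 0}^{x_i} Γ i j + Σ_{j>i} ∫_0^{x_i} Γ i j` satisfy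
`Σ_i f_i(x_i) ≥ Σ_{i<j} x_i x_j`, with equality iff `x_j = Γ i j (x_i)` for all `i < j`. -/
theorem multi_young_inequality (k : ℕ) (hk : 2 ≤ k)
    (Γ : Fin k → Fin k → ℝ → ℝ)
    (hcont : ∀ i j : Fin k, i < j → Continuous (Γ i j))
    (hmono : ∀ i j : Fin k, i < j → StrictMono (Γ i j))
    (hbij : ∀ i j : Fin k, i < j → Function.Bijective (Γ i j))
    (hinv₁ : ∀ i j : Fin k, i < j → Function.LeftInverse (Γ j i) (Γ i j))
    (hinv₂ : ∀ i j : Fin k, i < j → Function.RightInverse (Γ j i) (Γ i j))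
    (f : Fin k → ℝ → ℝ)
    (hf : ∀ (i : Fin k) (t : ℝ),
      f i t = (∑ j ∈ Finset.univ.filter (fun j : Fin k => j < i),
                ∫ u in (Γ j i 0)..t, Γ i j u) +
              ∑ j ∈ Finset.univ.filter (fun j : Fin k => i < j),
                ∫ u in (0 : ℝ)..t, Γ i j u) :
    ∀ x : Fin k → ℝ,
      cCost x ≤ ∑ i, f i (x i) ∧
      ((∑ i, f i (x i)) = cCost x ↔ ∀ i j : Fin k, i < j → x j = Γ i j (x i)) :=
  multi_young_inequality_general k Γ hcont hmono hinv₁ hinv₂ f hf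
end

section
/- Let γ_1, …, γ_k : ℝ → ℝ be nondecreasing functions with Σ_{i=1}^k γ_i(s) = s for all s ∈ ℝ, and let γ(s) = (γ_1(s), …, γ_k(s)). Suppose u ∈ ℝ^k satisfies u = γ(s(u)), where s(x) = Σ_{i=1}^k x_i, and let x = u + r for some r ∈ ℝ^k. Then ‖x − γ(s(x))‖² ≤ 2 s(r)² + 2 ‖r‖². -/
open Finset

/-!
Write `d i = γ i (s x) - γ i (s u)`. Since `u = γ (s u)`, the error is `x - γ (s x) = r - d`, so
`‖x - γ (s x)‖² ≤ 2 ‖d‖² + 2 ‖r‖²`. Monotonicity makes all `d i` share the sign of `s x - s u`, and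
for numbers of one sign the sum of squares is at most the square of the sum; finally
`s d = s x - s u = s r` because the `γ i` sum to the identity.
-/

namespace Finset

variable {ι α R : Type*} [CommRing R] [LinearOrder R] [IsStrictOrderedRing R] (s : Finset ι)

lemma sum_sq_le_sq_sum_of_nonpos {f : ι → R} (hf : ∀ i ∈ s, f i ≤ 0) :
    ∑ i ∈ s, f i ^ 2 ≤ (∑ i ∈ s, f i) ^ 2 := by
  simpa only [neg_sq, sum_neg_distrib] using
    sum_sq_le_sq_sum_of_nonneg (s := s) (f := fun i ↦ -f i) fun i hi ↦ neg_nonneg.2 (hf i hi)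

lemma sum_sq_le_sq_sum_of_monotone [LinearOrder α] {γ : ι → α → R}
    (hmono : ∀ i, Monotone (γ i)) (a b : α) :
    ∑ i ∈ s, (γ i b - γ i a) ^ 2 ≤ (∑ i ∈ s, (γ i b - γ i a)) ^ 2 := by
  rcases le_total a b with hab | hba
  · exact sum_sq_le_sq_sum_of_nonneg fun i _ ↦ sub_nonneg.2 (hmono i hab)
  · exact sum_sq_le_sq_sum_of_nonpos s fun i _ ↦ sub_nonpos.2 (hmono i hba)

lemma sum_sq_sub_le (f g : ι → R) :
    ∑ i ∈ s, (f i - g i) ^ 2 ≤ 2 * ∑ i ∈ s, f i ^ 2 + 2 * ∑ i ∈ s, g i ^ 2 := by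
  rw [mul_sum, mul_sum, ← sum_add_distrib]
  refine sum_le_sum fun i _ ↦ ?_
  simpa only [← sub_eq_add_neg, neg_sq, mul_add] using add_sq_le (a := f i) (b := -g i)

end Finset

/-- Let `γ_i` be nondecreasing with `Σ_i γ_i(s) = s`, and suppose
`u = γ(s(u))` where `s(x) = Σ_i x_i`. Then for `x = u + r`,
`‖x − γ(s(x))‖² ≤ 2 s(r)² + 2 ‖r‖²`. -/
theorem reconstruction_error_bound (k : ℕ) (γ : Fin k → ℝ → ℝ)
    (hmono : ∀ i, Monotone (γ i))
    (hsum : ∀ s : ℝ, ∑ i, γ i s = s)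
    (u r x : Fin k → ℝ)
    (hu : ∀ i, u i = γ i (∑ j, u j))
    (hx : ∀ i, x i = u i + r i) :
    ∑ i, (x i - γ i (∑ j, x j)) ^ 2 ≤ 2 * (∑ i, r i) ^ 2 + 2 * ∑ i, (r i) ^ 2 := by
  set d : Fin k → ℝ := fun i ↦ γ i (∑ j, x j) - γ i (∑ j, u j)
  have herror : ∀ i, x i - γ i (∑ j, x j) = r i - d i := fun i ↦ by
    simp only [d, hx i]
    rw [hu i]
    ring
  have hsum_d : ∑ i, d i = ∑ i, r i := by
    simp only [d, sum_sub_distrib, hsum, hx, sum_add_distrib]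
    ring
  have hd_sq : ∑ i, d i ^ 2 ≤ (∑ i, r i) ^ 2 := by
    rw [← hsum_d]
    exact sum_sq_le_sq_sum_of_monotone univ hmono (∑ j, u j) (∑ j, x j)
  calc ∑ i, (x i - γ i (∑ j, x j)) ^ 2 = ∑ i, (r i - d i) ^ 2 := by simp only [herror]
    _ ≤ 2 * ∑ i, r i ^ 2 + 2 * ∑ i, d i ^ 2 := sum_sq_sub_le univ r d
    _ ≤ 2 * (∑ i, r i) ^ 2 + 2 * ∑ i, r i ^ 2 := by linarith
end

section
/- Let ĝ_1, …, ĝ_k : ℝ → ℝ be twice continuously differentiable with ĝ_i''(x) ≥ 1 for all x ∈ ℝ, so that each ĝ_i' is a strictly increasing bijection of ℝ and γ̂_i = (ĝ_i')⁻¹ : ℝ → ℝ is well defined. Suppose Σ_{i=1}^k ĝ_i(y_i) ≥ s(y)²/2 for all y ∈ ℝ^k, and Σ_{i=1}^k γ̂_i(t) = t for all t ∈ ℝ. Then for every x ∈ ℝ^k, Σ_{i=1}^k ĝ_i(x_i) − s(x)²/2 ≥ (1/2) ‖x − γ̂(s(x))‖², where γ̂(t) = (γ̂_1(t), …, γ̂_k(t)).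 -/
/-!
Each `ĝ_i` is `1`-strongly convex, so it lies above its tangent parabola at `y_i = γ̂_i(s(x))`,
where its slope is `s(x)`. Summing over `i`, the linear terms cancel because `s(y) = s(x)`, and
the remaining `Σ ĝ_i(y_i)` is at least `s(y)²/2 = s(x)²/2`.
-/

open Finset

lemma ConvexOn.add_deriv_mul_sub_le {S : Set ℝ} {f : ℝ → ℝ} (hfc : ConvexOn ℝ S f)
    {a b : ℝ} (ha : a ∈ S) (hb : b ∈ S) (hfd : DifferentiableAt ℝ f b) :
    f b + deriv f b * (a - b) ≤ f a := by
  rcases lt_trichotomy b a with hba | rfl | hab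
  · have := hfc.deriv_le_slope hb ha hba hfd
    rw [slope_def_field, le_div_iff₀ (sub_pos.mpr hba)] at this
    linarith
  · simp
  · have := hfc.slope_le_deriv ha hb hab hfd
    rw [slope_def_field, div_le_iff₀ (sub_pos.mpr hab)] at this
    linarith

lemma add_deriv_mul_sub_add_sq_le_of_le_deriv2 {f : ℝ → ℝ} {m : ℝ} (hf : Differentiable ℝ f)
    (hf' : Differentiable ℝ (deriv f)) (hm : ∀ x, m ≤ deriv (deriv f) x) (a b : ℝ) :
    f b + deriv f b * (a - b) + m / 2 * (a - b) ^ 2 ≤ f a := by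
  -- The tangent line of the convex function `f - m x² / 2` at `b` is the claimed parabola.
  set h : ℝ → ℝ := fun x => f x - m / 2 * x ^ 2
  have h_hasDeriv : ∀ x, HasDerivAt h (deriv f x - m * x) x := fun x =>
    ((hf x).hasDerivAt.fun_sub ((hasDerivAt_pow 2 x).const_mul (m / 2))).congr_deriv
      (by norm_num; ring)
  have hderiv : deriv h = fun x => deriv f x - m * x := funext fun x => (h_hasDeriv x).deriv
  have deriv_h_hasDeriv : ∀ x, HasDerivAt (deriv h) (deriv (deriv f) x - m) x := fun x => by
    simpa [hderiv] using (hf' x).hasDerivAt.fun_sub ((hasDerivAt_id' x).const_mul m)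
  have hconv : ConvexOn ℝ Set.univ h :=
    convexOn_univ_of_deriv2_nonneg (fun x => (h_hasDeriv x).differentiableAt)
      (fun x => (deriv_h_hasDeriv x).differentiableAt)
      fun x => by
        rw [Function.iterate_succ_apply, Function.iterate_one, (deriv_h_hasDeriv x).deriv]
        linarith [hm x]
  have htangent :=
    hconv.add_deriv_mul_sub_le (Set.mem_univ a) (Set.mem_univ b) (h_hasDeriv b).differentiableAt
  rw [(h_hasDeriv b).deriv] at htangent
  linear_combination htangent

theorem strong_convexity_lower_bound_general (k : ℕ)
    (g γ : Fin k → ℝ → ℝ)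
    (hg : ∀ i, ContDiff ℝ 2 (g i))
    (hg'' : ∀ (i : Fin k) (x : ℝ), 1 ≤ deriv (deriv (g i)) x)
    (hγ₂ : ∀ i, Function.RightInverse (γ i) (deriv (g i)))
    (hdual : ∀ y : Fin k → ℝ, (∑ i, y i) ^ 2 / 2 ≤ ∑ i, g i (y i))
    (hsum : ∀ t : ℝ, ∑ i, γ i t = t) :
    ∀ x : Fin k → ℝ,
      (1 / 2) * ∑ i, (x i - γ i (∑ j, x j)) ^ 2 ≤
        (∑ i, g i (x i)) - (∑ i, x i) ^ 2 / 2 := by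
  intro x
  set t := ∑ j, x j
  set y : Fin k → ℝ := fun i => γ i t
  have hsy : ∑ i, y i = t := hsum t
  have htangent : ∀ i, g i (y i) + t * (x i - y i) + 1 / 2 * (x i - y i) ^ 2 ≤ g i (x i) :=
    fun i => by
      simpa [y, hγ₂ i t] using add_deriv_mul_sub_add_sq_le_of_le_deriv2
        ((hg i).differentiable (by norm_num)) (hg i).differentiable_deriv_two (hg'' i) (x i) (y i)
  have hlinear : ∑ i, t * (x i - y i) = 0 := by
    rw [← mul_sum, sum_sub_distrib, hsy, sub_self, mul_zero]
  have hsummed := sum_le_sum fun i (_ : i ∈ univ) => htangent i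
  rw [sum_add_distrib, sum_add_distrib, hlinear, ← mul_sum] at hsummed
  have hdual_y : t ^ 2 / 2 ≤ ∑ i, g i (y i) := hsy ▸ hdual y
  linarith

/-- If `ĝ_i` are `C²` with `ĝ_i'' ≥ 1` (so each `ĝ_i'` is a strictly
increasing bijection with inverse `γ̂_i`), `Σ_i ĝ_i(y_i) ≥ s(y)²/2` for all `y`, and
`Σ_i γ̂_i(t) = t` for all `t`, then for every `x`,
`Σ_i ĝ_i(x_i) − s(x)²/2 ≥ (1/2) ‖x − γ̂(s(x))‖²`. -/
theorem strong_convexity_lower_bound (k : ℕ)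
    (g γ : Fin k → ℝ → ℝ)
    (hg : ∀ i, ContDiff ℝ 2 (g i))
    (hg'' : ∀ (i : Fin k) (x : ℝ), 1 ≤ deriv (deriv (g i)) x)
    (hγ₁ : ∀ i, Function.LeftInverse (γ i) (deriv (g i)))
    (hγ₂ : ∀ i, Function.RightInverse (γ i) (deriv (g i)))
    (hdual : ∀ y : Fin k → ℝ, (∑ i, y i) ^ 2 / 2 ≤ ∑ i, g i (y i))
    (hsum : ∀ t : ℝ, ∑ i, γ i t = t) :
    ∀ x : Fin k → ℝ,
      (1 / 2) * ∑ i, (x i - γ i (∑ j, x j)) ^ 2 ≤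
        (∑ i, g i (x i)) - (∑ i, x i) ^ 2 / 2 :=
  strong_convexity_lower_bound_general k g γ hg hg'' hγ₂ hdual hsum
end

section
/- Let (Z_m)_{m=1}^n be independent and identically distributed random variables with values in a measurable space E, let N ∈ ℕ, B > 0, and let h_1, …, h_N : E → ℝ be measurable functions with |h_ℓ(z)| ≤ B for all z ∈ E and E[h_ℓ(Z_1)] = 0 for each ℓ ∈ {1, …, N}. Then E[ max_{1 ≤ ℓ ≤ N} | n^{-1} Σ_{m=1}^n h_ℓ(Z_m) | ] ≤ B √(2/n) ( √π + √(log(2N)) ). -/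
/-!
By Hoeffding's lemma each `h ℓ (Z m)` has a sub-Gaussian moment generating function with
variance proxy `B²`, so by independence each empirical mean `n⁻¹ ∑ₘ h ℓ (Z m)` has proxy `B² / n`.
For a finite family `X₁, …, X_N` with common proxy `c`, Jensen's inequality and a union bound over
the `2N` variables `± Xᵢ` give `exp (t E[maxᵢ |Xᵢ|]) ≤ E[exp (t maxᵢ |Xᵢ|)] ≤ 2N exp (c t² / 2)`;
optimising in `t` yields `E[maxᵢ |Xᵢ|] ≤ √(2 c log (2N))`, which for `c = B² / n` is
`B √(2/n) √(log (2N))`.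
-/

open MeasureTheory ProbabilityTheory Finset
open scoped NNReal

lemma exp_mul_iSup_abs_le_sum {ι : Type*} [Fintype ι] [Nonempty ι] (x : ι → ℝ) {t : ℝ}
    (ht : 0 ≤ t) :
    Real.exp (t * ⨆ i, |x i|) ≤ ∑ i, (Real.exp (t * x i) + Real.exp (-t * x i)) := by
  obtain ⟨i, hi⟩ := exists_eq_ciSup_of_finite (f := fun i ↦ |x i|)
  calc Real.exp (t * ⨆ i, |x i|) = Real.exp |t * x i| := by rw [← hi, abs_mul, abs_of_nonneg ht]
    _ ≤ Real.exp (t * x i) + Real.exp (-t * x i) := by rw [neg_mul]; exact Real.exp_abs_le _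
    _ ≤ ∑ i, (Real.exp (t * x i) + Real.exp (-t * x i)) :=
      single_le_sum (f := fun i ↦ Real.exp (t * x i) + Real.exp (-t * x i))
        (fun _ _ ↦ by positivity) (mem_univ i)

section SubgaussianMaximal

variable {Ω ι : Type*} [MeasurableSpace Ω] {μ : Measure Ω} [Fintype ι]
  {X : ι → Ω → ℝ} {c : ℝ≥0}

lemma integrable_iSup_abs [Nonempty ι] (hX : ∀ i, HasSubgaussianMGF (X i) c μ) :
    Integrable (fun ω ↦ ⨆ i, |X i ω|) μ := by
  refine (integrable_finsetSum univ fun i _ ↦ (hX i).integrable.abs).mono'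
    (AEMeasurable.iSup fun i ↦ (hX i).aemeasurable.abs).aestronglyMeasurable
    (ae_of_all _ fun ω ↦ ?_)
  rw [Real.norm_eq_abs, abs_of_nonneg (Real.iSup_nonneg fun i ↦ abs_nonneg _)]
  exact ciSup_le fun j ↦ single_le_sum (f := fun i ↦ |X i ω|) (fun _ _ ↦ abs_nonneg _) (mem_univ j)

lemma integrable_exp_mul_iSup_abs [Nonempty ι] (hX : ∀ i, HasSubgaussianMGF (X i) c μ) {t : ℝ}
    (ht : 0 ≤ t) : Integrable (fun ω ↦ Real.exp (t * ⨆ i, |X i ω|)) μ := by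
  refine (integrable_finsetSum univ fun i _ ↦
      ((hX i).integrable_exp_mul t).add ((hX i).integrable_exp_mul (-t))).mono' ?_ ?_
  · exact ((AEMeasurable.iSup fun i ↦ (hX i).aemeasurable.abs).const_mul t).exp
      |>.aestronglyMeasurable
  · refine ae_of_all _ fun ω ↦ ?_
    simpa [Real.norm_eq_abs] using exp_mul_iSup_abs_le_sum (fun i ↦ X i ω) ht

lemma integral_exp_mul_iSup_abs_le [Nonempty ι] (hX : ∀ i, HasSubgaussianMGF (X i) c μ) {t : ℝ}
    (ht : 0 ≤ t) :
    ∫ ω, Real.exp (t * ⨆ i, |X i ω|) ∂μ ≤ 2 * Fintype.card ι * Real.exp (c * t ^ 2 / 2) := by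
  have hint (i : ι) (s : ℝ) := (hX i).integrable_exp_mul s
  calc ∫ ω, Real.exp (t * ⨆ i, |X i ω|) ∂μ
      ≤ ∫ ω, ∑ i, (Real.exp (t * X i ω) + Real.exp (-t * X i ω)) ∂μ :=
        integral_mono (integrable_exp_mul_iSup_abs hX ht)
          (integrable_finsetSum univ fun i _ ↦ (hint i t).add (hint i (-t)))
          fun ω ↦ exp_mul_iSup_abs_le_sum (fun i ↦ X i ω) ht
    _ = ∑ i, (mgf (X i) μ t + mgf (X i) μ (-t)) := by
        rw [integral_finsetSum (f := fun i ω ↦ Real.exp (t * X i ω) + Real.exp (-t * X i ω)) univ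
          fun i _ ↦ (hint i t).add (hint i (-t))]
        exact sum_congr rfl fun i _ ↦ integral_add (hint i t) (hint i (-t))
    _ ≤ ∑ _i : ι, (Real.exp (c * t ^ 2 / 2) + Real.exp (c * t ^ 2 / 2)) := by
        gcongr with i
        · exact (hX i).mgf_le t
        · simpa using (hX i).mgf_le (-t)
    _ = 2 * Fintype.card ι * Real.exp (c * t ^ 2 / 2) := by
        rw [sum_const, card_univ, nsmul_eq_mul]; ring

variable [IsProbabilityMeasure μ]

lemma mul_integral_iSup_abs_le [Nonempty ι] (hX : ∀ i, HasSubgaussianMGF (X i) c μ) {t : ℝ}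
    (ht : 0 ≤ t) :
    t * ∫ ω, ⨆ i, |X i ω| ∂μ ≤ Real.log (2 * Fintype.card ι) + c * t ^ 2 / 2 := by
  have hjensen :
      Real.exp (t * ∫ ω, ⨆ i, |X i ω| ∂μ) ≤ ∫ ω, Real.exp (t * ⨆ i, |X i ω|) ∂μ := by
    rw [← integral_const_mul]
    exact convexOn_exp.map_integral_le Real.continuous_exp.continuousOn isClosed_univ
      (ae_of_all _ fun _ ↦ Set.mem_univ _) ((integrable_iSup_abs hX).const_mul t)
      (integrable_exp_mul_iSup_abs hX ht)
  have hcard : (0 : ℝ) < 2 * Fintype.card ι := by positivity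
  rw [← Real.log_exp (c * t ^ 2 / 2), ← Real.log_mul hcard.ne' (Real.exp_pos _).ne',
    Real.le_log_iff_exp_le (by positivity)]
  exact hjensen.trans (integral_exp_mul_iSup_abs_le hX ht)

theorem integral_iSup_abs_le_sqrt (hX : ∀ i, HasSubgaussianMGF (X i) c μ) (hc : 0 < c) :
    ∫ ω, ⨆ i, |X i ω| ∂μ ≤ √(2 * c * Real.log (2 * Fintype.card ι)) := by
  cases isEmpty_or_nonempty ι
  · simp [Real.iSup_of_isEmpty]
  set L := Real.log (2 * Fintype.card ι)
  have hL : 0 < L := Real.log_pos (by have := Fintype.card_pos (α := ι); norm_cast; omega)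
  -- `t` minimises `(L + c t² / 2) / t`.
  set t := √(2 * L / c)
  have ht : 0 < t := by positivity
  have hct : c * t ^ 2 / 2 = L := by
    rw [Real.sq_sqrt (by positivity)]; field_simp
  have hprod : √(2 * c * L) * t = 2 * L := by
    rw [← Real.sqrt_mul (by positivity), show 2 * c * L * (2 * L / c) = (2 * L) ^ 2 by
      field_simp]
    exact Real.sqrt_sq (by positivity)
  refine le_of_mul_le_mul_right ?_ ht
  rw [hprod, mul_comm]
  linarith [mul_integral_iSup_abs_le hX ht.le]

end SubgaussianMaximal

section Hoeffding

variable {Ω : Type*} [MeasurableSpace Ω] {μ : Measure Ω} {c : ℝ≥0}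

lemma hasSubgaussianMGF_of_abs_le [IsProbabilityMeasure μ] {X : Ω → ℝ} {B : ℝ}
    (hm : AEMeasurable X μ) (hb : ∀ᵐ ω ∂μ, |X ω| ≤ B) (hc : μ[X] = 0) :
    HasSubgaussianMGF X (‖B‖₊ ^ 2) μ := by
  convert hasSubgaussianMGF_of_mem_Icc_of_integral_eq_zero hm (hb.mono fun _ ↦ abs_le.1) hc
    using 2
  rw [sub_neg_eq_add, ← two_mul, nnnorm_mul]
  simp

lemma hasSubgaussianMGF_average_of_iIndepFun {ι : Type*} [Fintype ι] {X : ι → Ω → ℝ}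
    (h_indep : iIndepFun X μ) (hX : ∀ i, HasSubgaussianMGF (X i) c μ) :
    HasSubgaussianMGF (fun ω ↦ (Fintype.card ι : ℝ)⁻¹ * ∑ i, X i ω) (c / Fintype.card ι) μ := by
  convert (HasSubgaussianMGF.sum_of_iIndepFun h_indep fun i _ ↦ hX i).const_mul
    (Fintype.card ι : ℝ)⁻¹ using 1
  refine NNReal.eq ?_
  change (c : ℝ) / Fintype.card ι = (Fintype.card ι : ℝ)⁻¹ ^ 2 * ((∑ _i : ι, c : ℝ≥0) : ℝ)
  rw [NNReal.coe_sum, sum_const, card_univ, nsmul_eq_mul]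
  rcases eq_or_ne (Fintype.card ι : ℝ) 0 with hk | hk
  · simp [hk]
  · field_simp

end Hoeffding

theorem maximal_inequality_bounded_iid_general
    {Ω : Type*} [MeasurableSpace Ω] (μ : Measure Ω) [IsProbabilityMeasure μ]
    {E : Type*} [MeasurableSpace E]
    (n : ℕ) (hn : 0 < n) (Z : Fin n → Ω → E)
    (hZindep : iIndepFun Z μ)
    (hZident : ∀ m m' : Fin n, IdentDistrib (Z m) (Z m') μ μ)
    (N : ℕ) (B : ℝ) (hB : 0 < B)
    (h : Fin N → E → ℝ)
    (hmeas : ∀ ℓ, Measurable (h ℓ))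
    (hbound : ∀ (ℓ : Fin N) (z : E), |h ℓ z| ≤ B)
    (hcentered : ∀ ℓ : Fin N, ∫ ω, h ℓ (Z ⟨0, hn⟩ ω) ∂μ = 0) :
    ∫ ω, (⨆ ℓ : Fin N, |(n : ℝ)⁻¹ * ∑ m : Fin n, h ℓ (Z m ω)|) ∂μ ≤
      B * Real.sqrt (2 / n) * (Real.sqrt Real.pi + Real.sqrt (Real.log (2 * N))) := by
  have hsummand (ℓ : Fin N) (m : Fin n) :
      HasSubgaussianMGF (fun ω ↦ h ℓ (Z m ω)) (‖B‖₊ ^ 2) μ :=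
    hasSubgaussianMGF_of_abs_le ((hmeas ℓ).comp_aemeasurable (hZident m m).aemeasurable_fst)
      (ae_of_all _ fun ω ↦ hbound ℓ (Z m ω))
      (((hZident m ⟨0, hn⟩).comp (hmeas ℓ)).integral_eq.trans (hcentered ℓ))
  have haverage (ℓ : Fin N) : HasSubgaussianMGF
      (fun ω ↦ (n : ℝ)⁻¹ * ∑ m : Fin n, h ℓ (Z m ω)) (‖B‖₊ ^ 2 / n) μ := by
    simpa using hasSubgaussianMGF_average_of_iIndepFun
      (hZindep.comp (fun _ ↦ h ℓ) fun _ ↦ hmeas ℓ) (hsummand ℓ)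
  have hproxy : ((‖B‖₊ ^ 2 / n : ℝ≥0) : ℝ) = B ^ 2 / n := by simp [sq_abs]
  calc ∫ ω, (⨆ ℓ : Fin N, |(n : ℝ)⁻¹ * ∑ m : Fin n, h ℓ (Z m ω)|) ∂μ
      ≤ √(2 * (B ^ 2 / n) * Real.log (2 * N)) := by
        simpa [hproxy] using integral_iSup_abs_le_sqrt haverage
          (div_pos (pow_pos (nnnorm_pos.2 hB.ne') 2) (Nat.cast_pos.2 hn))
    _ = B * √(2 / n) * √(Real.log (2 * N)) := by
        rw [show 2 * (B ^ 2 / n) * Real.log (2 * N) = B ^ 2 * (2 / n) * Real.log (2 * N) by ring,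
          Real.sqrt_mul (by positivity), Real.sqrt_mul (sq_nonneg B), Real.sqrt_sq hB.le]
    _ ≤ B * √(2 / n) * (√Real.pi + √(Real.log (2 * N))) := by
        gcongr
        exact le_add_of_nonneg_left (Real.sqrt_nonneg _)

/-- For i.i.d. `E`-valued random variables `Z_1, …, Z_n` and measurable
`h_1, …, h_N : E → ℝ` bounded by `B` and centered (`E[h_ℓ(Z_1)] = 0`),
`E[max_ℓ |n⁻¹ Σ_m h_ℓ(Z_m)|] ≤ B √(2/n) (√π + √(log(2N)))`. -/
theorem maximal_inequality_bounded_iid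
    {Ω : Type*} [MeasurableSpace Ω] (μ : Measure Ω) [IsProbabilityMeasure μ]
    {E : Type*} [MeasurableSpace E]
    (n : ℕ) (hn : 0 < n) (Z : Fin n → Ω → E)
    (hZmeas : ∀ m, Measurable (Z m))
    (hZindep : iIndepFun Z μ)
    (hZident : ∀ m m' : Fin n, IdentDistrib (Z m) (Z m') μ μ)
    (N : ℕ) (B : ℝ) (hB : 0 < B)
    (h : Fin N → E → ℝ)
    (hmeas : ∀ ℓ, Measurable (h ℓ))
    (hbound : ∀ (ℓ : Fin N) (z : E), |h ℓ z| ≤ B)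
    (hcentered : ∀ ℓ : Fin N, ∫ ω, h ℓ (Z ⟨0, hn⟩ ω) ∂μ = 0) :
    ∫ ω, (⨆ ℓ : Fin N, |(n : ℝ)⁻¹ * ∑ m : Fin n, h ℓ (Z m ω)|) ∂μ ≤
      B * Real.sqrt (2 / n) * (Real.sqrt Real.pi + Real.sqrt (Real.log (2 * N))) :=
  maximal_inequality_bounded_iid_general μ n hn Z hZindep hZident N B hB h hmeas hbound hcentered
end

section
/- Let k ≥ 2, λ ≥ 0, m = (m₀, m₁, m₂, m₃) ∈ ℝ⁴_{≥0}. Let f = (f_1, …, f_k) ∈ (𝒞_m)^k be a c-conjugate tuple, Γ = {x ∈ ℝ^k : H(x; f) = 0}, and γ = γ_f the associated curve. Let U and R be independent ℝ^k-valued random vectors with U ∈ Γ almost surely and E[R] = 0, set X = U + R, and assume E‖X‖² < ∞. Let X_1, …, X_n be i.i.d. copies of X, and let f̂ be a random c-conjugate tuple in (𝒞_m)^k, measurable in the samples, which almost surely minimizes the empirical objective n^{-1} Σ_{m=1}^n [ H(X_m; h) + λ ‖X_m − γ_h(s(X_m))‖² ] over all c-conjugate tuples h ∈ (𝒞_m)^k;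 write γ̂ = γ_{f̂}. Then the expected empirical mean squared error satisfies E[ n^{-1} Σ_{m=1}^n ‖γ(s(X_m)) − γ̂(s(X_m))‖² ] ≤ ((16λ + 4)k + 16λ + 2m₂ + 6)/(2λ + 1) · E‖R‖². -/
open MeasureTheory ProbabilityTheory Finset

noncomputable section

/-- The admissible class `𝒞_m`: `C²` functions with `|f(0)| ≤ m₀`, `|f'(0)| ≤ m₁`,
`0 ≤ f'' ≤ m₂`, and `f''` Lipschitz with constant `m₃`. -/
def Cm (m₀ m₁ m₂ m₃ : ℝ) : Set (ℝ → ℝ) :=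
  {f | ContDiff ℝ 2 f ∧ |f 0| ≤ m₀ ∧ |deriv f 0| ≤ m₁ ∧
    (∀ x : ℝ, 0 ≤ deriv (deriv f) x ∧ deriv (deriv f) x ≤ m₂) ∧
    (∀ x x' : ℝ, |deriv (deriv f) x - deriv (deriv f) x'| ≤ m₃ * |x - x'|)}

/-- The diagonal coordinate `s(x) = Σ_i x_i`. -/
def sCoord {k : ℕ} (x : Fin k → ℝ) : ℝ := ∑ i, x i

/-- The loss `H(x; f) = Σ_i f_i(x_i) − c(x)`. -/
def Hfun {k : ℕ} (f : Fin k → ℝ → ℝ) (x : Fin k → ℝ) : ℝ :=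
  (∑ i, f i (x i)) - cCost x

/-- The tuple `f` is `c`-conjugate: each `f_i(t)` is the supremum of
`c(x) − Σ_{j≠i} f_j(x_j)` over all `x` with `x_i = t`. -/
def CConjugateTuple {k : ℕ} (f : Fin k → ℝ → ℝ) : Prop :=
  ∀ (i : Fin k) (t : ℝ),
    IsLUB {v : ℝ | ∃ x : Fin k → ℝ, x i = t ∧
      v = cCost x - ∑ j ∈ Finset.univ.erase i, f j (x j)} (f i t)

/-- The monotone curve `γ_f(t) = ((g_1')⁻¹(t), …, (g_k')⁻¹(t))` where `g_i = f_i + q`,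
`q(x) = x²/2`, so that `g_i'(y) = f_i'(y) + y`. -/
def curveOf {k : ℕ} (f : Fin k → ℝ → ℝ) (t : ℝ) : Fin k → ℝ :=
  fun i => Function.invFun (fun y : ℝ => deriv (f i) y + y) t

/-- The empirical objective
`n⁻¹ Σ_m [H(X_m; h) + λ ‖X_m − γ_h(s(X_m))‖²]` for samples `X_1, …, X_n`. -/
def empObj {k : ℕ} (n : ℕ) (lam : ℝ) (X : Fin n → Fin k → ℝ)
    (h : Fin k → ℝ → ℝ) : ℝ :=
  (n : ℝ)⁻¹ * ∑ m : Fin n,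
    (Hfun h (X m) + lam * ∑ i, (X m i - curveOf h (sCoord (X m)) i) ^ 2)

/-!
Write `g_i = f_i + x ^ 2 / 2`, so that `H(x) = Σ g_i(x_i) - s(x) ^ 2 / 2` and `γ_i = (g_i')⁻¹`.
Convexity of the `f_i` gives the three-point bound
`H(γ t) + (s x - s(γ t)) (t - (s x + s(γ t)) / 2) + ‖x - γ t‖² / 2 ≤ H x`. Since `H ≥ 0` and, by
`c`-conjugacy, `H` comes arbitrarily close to `0` on every coordinate slice `{x_i = a}`, this forces
`H = 0` along the curve and `s(γ t) = t`; hence `‖x - γ(s x)‖² ≤ 2 H(x)`. Conversely `f_i'' ≤ m₂`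
gives `H(u + r) ≤ (m₂ + 1)/2 ‖r‖²` and `‖u + r - γ(s(u + r))‖² ≤ (2k + 2) ‖r‖²` for `u ∈ Γ`.
Comparing the empirical objective at `f̂` with its value at `f` bounds the empirical error of `γ̂`
pathwise by `4/(2λ+1)` times the mean of `H(X_m; f)` plus `(8λ+2)/(2λ+1)` times the mean of
`‖X_m - γ(s X_m)‖²`; each `X_m` has the law of `U + R`, so the two bounds above finish the proof.
-/

open Filter Function

section Expanding

variable {φ : ℝ → ℝ} {L : ℝ}

theorem strictMono_of_expanding (hL : 0 < L) (hφ : ∀ u v, u ≤ v → v - u ≤ L * (φ v - φ u)) :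
    StrictMono φ := fun u v huv =>
  sub_pos.1 <| pos_of_mul_pos_right ((sub_pos.2 huv).trans_le (hφ u v huv.le)) hL.le

variable (hcont : Continuous φ) (hL : 0 < L) (hφ : ∀ u v, u ≤ v → v - u ≤ L * (φ v - φ u))
include hcont hL hφ

theorem surjective_of_expanding : Surjective φ := by
  refine hcont.surjective ?_ ?_
  · refine tendsto_atTop_mono' _ ?_
      (tendsto_atTop_add_const_left _ (φ 0) (tendsto_id.atTop_div_const hL))
    filter_upwards [eventually_ge_atTop 0] with v hv
    have : v / L ≤ φ v - φ 0 := (div_le_iff₀' hL).2 (by linarith [hφ 0 v hv])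
    simp only [id]
    linarith
  · refine tendsto_atBot_mono' _ ?_
      (tendsto_atBot_add_const_left _ (φ 0) (tendsto_id.atBot_div_const hL))
    filter_upwards [eventually_le_atBot 0] with v hv
    have : φ v - φ 0 ≤ v / L := (le_div_iff₀' hL).2 (by linarith [hφ v 0 hv])
    simp only [id]
    linarith

theorem rightInverse_invFun_of_expanding (t : ℝ) : φ (invFun φ t) = t :=
  rightInverse_invFun (surjective_of_expanding hcont hL hφ) t

theorem monotone_invFun_of_expanding : Monotone (invFun φ) := fun t u htu =>
  (strictMono_of_expanding hL hφ).le_iff_le.1 (by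
    rwa [rightInverse_invFun_of_expanding hcont hL hφ,
      rightInverse_invFun_of_expanding hcont hL hφ])

theorem invFun_sub_le_of_expanding {t u : ℝ} (htu : t ≤ u) :
    invFun φ u - invFun φ t ≤ L * (u - t) := by
  simpa only [rightInverse_invFun_of_expanding hcont hL hφ] using
    hφ _ _ (monotone_invFun_of_expanding hcont hL hφ htu)

theorem sub_le_mul_invFun_sub_of_expanding {K : ℝ}
    (hK : ∀ u v, u ≤ v → φ v - φ u ≤ K * (v - u)) {t u : ℝ} (htu : t ≤ u) :
    u - t ≤ K * (invFun φ u - invFun φ t) := by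
  simpa only [rightInverse_invFun_of_expanding hcont hL hφ] using
    hK _ _ (monotone_invFun_of_expanding hcont hL hφ htu)

theorem continuous_invFun_of_expanding : Continuous (invFun φ) :=
  (monotone_invFun_of_expanding hcont hL hφ).continuous_of_surjective
    (leftInverse_invFun (strictMono_of_expanding hL hφ).injective).surjective

end Expanding

theorem deriv_mul_sub_le_sub_of_monotone_deriv {f : ℝ → ℝ} (hf : Differentiable ℝ f)
    (hmono : Monotone (deriv f)) (x y : ℝ) : deriv f x * (y - x) ≤ f y - f x := by
  have hconv := hmono.convexOn_univ_of_deriv hf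
  rcases lt_trichotomy x y with h | rfl | h
  · have := hconv.deriv_le_slope trivial trivial h (hf x)
    rwa [slope_def_field, le_div_iff₀ (sub_pos.2 h)] at this
  · simp
  · have := hconv.slope_le_deriv trivial trivial h (hf x)
    rw [slope_def_field, div_le_iff₀ (sub_pos.2 h)] at this
    linarith

theorem sub_le_deriv_mul_sub_add_of_deriv_sub_le {f : ℝ → ℝ} {m : ℝ} (hf : Differentiable ℝ f)
    (hm : ∀ u v, u ≤ v → deriv f v - deriv f u ≤ m * (v - u)) (x y : ℝ) :
    f y - f x ≤ deriv f x * (y - x) + m * (y - x) ^ 2 / 2 := by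
  set G : ℝ → ℝ := fun z => m * z ^ 2 / 2 - f z
  have hG : ∀ z, HasDerivAt G (m * z - deriv f z) z := fun z => by
    refine ((((hasDerivAt_pow 2 z).const_mul m).div_const 2).sub (hf z).hasDerivAt).congr_deriv ?_
    push_cast
    ring
  have hGd : deriv G = fun z => m * z - deriv f z := funext fun z => (hG z).deriv
  have := deriv_mul_sub_le_sub_of_monotone_deriv (fun z => (hG z).differentiableAt)
    (fun u v huv => by simp only [hGd]; linarith [hm u v huv]) x y
  simp only [hGd, G] at this
  linarith

/-- `g' = f' + id` for `g = f + x ^ 2 / 2`, so that `curveOf f t i = (gDeriv (f i))⁻¹ t`. -/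
def gDeriv (f : ℝ → ℝ) : ℝ → ℝ := fun y => deriv f y + y

namespace Cm

variable {m₀ m₁ m₂ m₃ : ℝ} {f : ℝ → ℝ} (hf : f ∈ Cm m₀ m₁ m₂ m₃)
include hf

theorem differentiable : Differentiable ℝ f :=
  hf.1.differentiable (by norm_num)

theorem differentiable_deriv : Differentiable ℝ (deriv f) :=
  (hf.1.iterate_deriv' 1 1).differentiable one_ne_zero

theorem monotone_deriv : Monotone (deriv f) :=
  monotone_of_deriv_nonneg (differentiable_deriv hf) fun x => (hf.2.2.2.1 x).1

theorem deriv_sub_deriv_le {u v : ℝ} (huv : u ≤ v) :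
    deriv f v - deriv f u ≤ m₂ * (v - u) :=
  image_sub_le_mul_sub_of_deriv_le (differentiable_deriv hf) (fun x => (hf.2.2.2.1 x).2) huv

theorem continuous_gDeriv : Continuous (gDeriv f) :=
  (differentiable_deriv hf).continuous.add continuous_id

theorem sub_le_gDeriv_sub (u v : ℝ) (huv : u ≤ v) :
    v - u ≤ 1 * (gDeriv f v - gDeriv f u) := by
  simp only [gDeriv]
  linarith [monotone_deriv hf huv]

theorem gDeriv_sub_le (u v : ℝ) (huv : u ≤ v) :
    gDeriv f v - gDeriv f u ≤ (m₂ + 1) * (v - u) := by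
  simp only [gDeriv]
  linarith [deriv_sub_deriv_le hf huv]

theorem gDeriv_mul_sub_add_sq_le (x y : ℝ) :
    gDeriv f y * (x - y) + (x - y) ^ 2 / 2 ≤ (f x + x ^ 2 / 2) - (f y + y ^ 2 / 2) := by
  simp only [gDeriv]
  linarith [deriv_mul_sub_le_sub_of_monotone_deriv (differentiable hf) (monotone_deriv hf) y x]

theorem sub_le_gDeriv_mul_sub_add_sq (x y : ℝ) :
    (f x + x ^ 2 / 2) - (f y + y ^ 2 / 2) ≤ gDeriv f y * (x - y) + (m₂ + 1) * (x - y) ^ 2 / 2 := by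
  simp only [gDeriv]
  linarith [sub_le_deriv_mul_sub_add_of_deriv_sub_le (differentiable hf)
    (fun u v => deriv_sub_deriv_le hf) y x]

end Cm

section Tuple

variable {k : ℕ}

def sqDist (x y : Fin k → ℝ) : ℝ := ∑ i, (x i - y i) ^ 2

theorem sqDist_nonneg (x y : Fin k → ℝ) : 0 ≤ sqDist x y :=
  Finset.sum_nonneg fun _ _ => sq_nonneg _

theorem sqDist_le_two_mul_add_two_mul (x y z : Fin k → ℝ) :
    sqDist x z ≤ 2 * sqDist y x + 2 * sqDist y z := by
  simp only [sqDist, Finset.mul_sum, ← Finset.sum_add_distrib]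
  exact Finset.sum_le_sum fun i _ => by nlinarith [sq_nonneg (x i + z i - 2 * y i)]

theorem sqDist_self_add (x r : Fin k → ℝ) : sqDist x (x + r) = ∑ i, r i ^ 2 := by
  simp [sqDist]

theorem eq_of_sqDist_le_zero {x y : Fin k → ℝ} (h : sqDist x y ≤ 0) : x = y := by
  funext i
  have := (Finset.sum_eq_zero_iff_of_nonneg fun i _ => sq_nonneg (x i - y i)).1
    (h.antisymm (sqDist_nonneg x y)) i (Finset.mem_univ i)
  exact sub_eq_zero.1 (pow_eq_zero_iff two_ne_zero |>.1 this)

theorem continuous_sCoord : Continuous (sCoord : (Fin k → ℝ) → ℝ) :=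
  continuous_finsetSum _ fun i _ => continuous_apply i

theorem sCoord_add (x y : Fin k → ℝ) : sCoord (x + y) = sCoord x + sCoord y :=
  Finset.sum_add_distrib

theorem two_mul_cCost (x : Fin k → ℝ) : 2 * cCost x = sCoord x ^ 2 - ∑ i, x i ^ 2 := by
  have hsplit : ∀ i j : Fin k, x i * x j = (if i < j then x i * x j else 0) +
      (if j < i then x j * x i else 0) + (if i = j then x i ^ 2 else 0) := by
    intro i j
    rcases lt_trichotomy i j with h | rfl | h
    · simp [h, h.not_gt, h.ne]
    · simp only [lt_irrefl, if_false, if_true]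
      ring
    · simp [h, h.not_gt, h.ne', mul_comm]
  have hsq : sCoord x ^ 2 = ∑ i, ∑ j, x i * x j := by rw [sCoord, sq, Finset.sum_mul_sum]
  rw [hsq, Finset.sum_congr rfl fun i _ => Finset.sum_congr rfl fun j _ => hsplit i j]
  simp only [Finset.sum_add_distrib]
  rw [Finset.sum_comm (f := fun i j => if j < i then x j * x i else 0)]
  simp only [cCost, sum_filter, Fintype.sum_prod_type, sum_ite_eq, mem_univ, ↓reduceIte,
    add_sub_cancel_right]
  ring

end Tuple

section Hfun

variable {k : ℕ} {f : Fin k → ℝ → ℝ}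

theorem Hfun_eq (x : Fin k → ℝ) :
    Hfun f x = ∑ i, (f i (x i) + x i ^ 2 / 2) - sCoord x ^ 2 / 2 := by
  rw [Hfun, Finset.sum_add_distrib, ← Finset.sum_div]
  linarith [two_mul_cCost x]

theorem Hfun_eq_sub (x : Fin k → ℝ) (i : Fin k) :
    Hfun f x = f i (x i) - (cCost x - ∑ j ∈ Finset.univ.erase i, f j (x j)) := by
  rw [Hfun, ← Finset.add_sum_erase _ _ (Finset.mem_univ i)]
  ring

theorem Hfun_nonneg (hconj : CConjugateTuple f) (hk : 0 < k) (x : Fin k → ℝ) : 0 ≤ Hfun f x := by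
  rw [Hfun_eq_sub x ⟨0, hk⟩]
  exact sub_nonneg.2 ((hconj _ _).1 ⟨x, rfl, rfl⟩)

theorem exists_Hfun_lt (hconj : CConjugateTuple f) (i : Fin k) (a : ℝ) {ε : ℝ} (hε : 0 < ε) :
    ∃ x : Fin k → ℝ, x i = a ∧ Hfun f x < ε := by
  obtain ⟨_, ⟨x, hxi, rfl⟩, hlt, -⟩ := (hconj i a).exists_between (sub_lt_self _ hε)
  refine ⟨x, hxi, ?_⟩
  rw [Hfun_eq_sub x i, hxi]
  linarith

end Hfun

section CurveOf

variable {k : ℕ} {f : Fin k → ℝ → ℝ} {m₀ m₁ m₂ m₃ : ℝ} (hf : ∀ i, f i ∈ Cm m₀ m₁ m₂ m₃)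
include hf

theorem continuous_Hfun : Continuous (Hfun f) := by
  have := fun i => (Cm.differentiable (hf i)).continuous
  unfold Hfun cCost
  fun_prop

theorem gDeriv_curveOf (t : ℝ) (i : Fin k) : gDeriv (f i) (curveOf f t i) = t :=
  rightInverse_invFun_of_expanding (Cm.continuous_gDeriv (hf i)) one_pos
    (Cm.sub_le_gDeriv_sub (hf i)) t

theorem monotone_curveOf (i : Fin k) : Monotone fun t => curveOf f t i :=
  monotone_invFun_of_expanding (Cm.continuous_gDeriv (hf i)) one_pos (Cm.sub_le_gDeriv_sub (hf i))

theorem continuous_curveOf : Continuous (curveOf f) :=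
  continuous_pi fun i =>
    continuous_invFun_of_expanding (Cm.continuous_gDeriv (hf i)) one_pos
      (Cm.sub_le_gDeriv_sub (hf i))

theorem continuous_sqDist_curveOf : Continuous fun x => sqDist x (curveOf f (sCoord x)) := by
  have hγ : Continuous fun x : Fin k → ℝ => curveOf f (sCoord x) :=
    (continuous_curveOf hf).comp continuous_sCoord
  exact continuous_finsetSum _ fun i _ =>
    ((continuous_apply i).sub ((continuous_apply i).comp hγ)).pow 2

theorem sq_curveOf_sub_le (i : Fin k) (t u : ℝ) :
    (curveOf f t i - curveOf f u i) ^ 2 ≤ (u - t) * (curveOf f u i - curveOf f t i) := by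
  have hlip : ∀ {t u : ℝ}, t ≤ u → curveOf f u i - curveOf f t i ≤ u - t := fun htu => by
    have := invFun_sub_le_of_expanding (Cm.continuous_gDeriv (hf i)) one_pos
      (Cm.sub_le_gDeriv_sub (hf i)) htu
    rwa [one_mul] at this
  rcases le_total t u with h | h
  · nlinarith [monotone_curveOf hf i h, hlip h]
  · nlinarith [monotone_curveOf hf i h, hlip h]

theorem sub_le_mul_sCoord_curveOf_sub (hk : 0 < k) (hm₂ : 0 ≤ m₂)
    (t u : ℝ) (htu : t ≤ u) :
    u - t ≤ (m₂ + 1) * (sCoord (curveOf f u) - sCoord (curveOf f t)) := by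
  let i : Fin k := ⟨0, hk⟩
  have hcoord : curveOf f u i - curveOf f t i ≤ sCoord (curveOf f u) - sCoord (curveOf f t) := by
    rw [sCoord, sCoord, ← Finset.sum_sub_distrib]
    exact Finset.single_le_sum (f := fun j => curveOf f u j - curveOf f t j)
      (fun j _ => sub_nonneg.2 (monotone_curveOf hf j htu)) (Finset.mem_univ i)
  calc u - t ≤ (m₂ + 1) * (curveOf f u i - curveOf f t i) :=
        sub_le_mul_invFun_sub_of_expanding (Cm.continuous_gDeriv (hf i)) one_pos
          (Cm.sub_le_gDeriv_sub (hf i)) (Cm.gDeriv_sub_le (hf i)) htu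
    _ ≤ (m₂ + 1) * (sCoord (curveOf f u) - sCoord (curveOf f t)) := by gcongr

theorem surjective_sCoord_curveOf (hk : 0 < k) (hm₂ : 0 ≤ m₂) :
    Surjective fun t => sCoord (curveOf f t) :=
  surjective_of_expanding (continuous_sCoord.comp (continuous_curveOf hf)) (by linarith)
    (sub_le_mul_sCoord_curveOf_sub hf hk hm₂)

theorem Hfun_curveOf_add_le_Hfun (x : Fin k → ℝ) (t : ℝ) :
    Hfun f (curveOf f t) +
        (sCoord x - sCoord (curveOf f t)) * (t - (sCoord x + sCoord (curveOf f t)) / 2) +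
        sqDist x (curveOf f t) / 2 ≤ Hfun f x := by
  set y := curveOf f t
  have hsum : t * (sCoord x - sCoord y) + sqDist x y / 2 ≤
      ∑ i, (f i (x i) + x i ^ 2 / 2) - ∑ i, (f i (y i) + y i ^ 2 / 2) := by
    rw [← Finset.sum_sub_distrib, sCoord, sCoord, ← Finset.sum_sub_distrib, Finset.mul_sum, sqDist,
      Finset.sum_div, ← Finset.sum_add_distrib]
    refine Finset.sum_le_sum fun i _ => ?_
    simpa only [y, gDeriv_curveOf hf] using Cm.gDeriv_mul_sub_add_sq_le (hf i) (x i) (y i)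
  rw [Hfun_eq, Hfun_eq]
  linarith

end CurveOf

section Curve

variable {k : ℕ} {f : Fin k → ℝ → ℝ} {m₀ m₁ m₂ m₃ : ℝ}
  (hf : ∀ i, f i ∈ Cm m₀ m₁ m₂ m₃) (hconj : CConjugateTuple f) (hk : 0 < k) (hm₂ : 0 ≤ m₂)
include hf hconj hk hm₂

theorem exists_Hfun_curveOf_lt (i : Fin k) (a : ℝ) {ε : ℝ} (hε : 0 < ε) :
    ∃ t, (a - curveOf f t i) ^ 2 / 2 + Hfun f (curveOf f t) < ε := by
  obtain ⟨x, hxi, hx⟩ := exists_Hfun_lt hconj i a hε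
  obtain ⟨t, ht : sCoord (curveOf f t) = sCoord x⟩ := surjective_sCoord_curveOf hf hk hm₂ (sCoord x)
  have hstar := Hfun_curveOf_add_le_Hfun hf x t
  rw [ht, sub_self, zero_mul, add_zero] at hstar
  have hi : (a - curveOf f t i) ^ 2 ≤ sqDist x (curveOf f t) := hxi ▸
    Finset.single_le_sum (f := fun j => (x j - curveOf f t j) ^ 2) (fun j _ => sq_nonneg _)
      (Finset.mem_univ i)
  exact ⟨t, by linarith⟩

theorem Hfun_curveOf (t₀ : ℝ) : Hfun f (curveOf f t₀) = 0 := by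
  let i : Fin k := ⟨0, hk⟩
  let φ : ℝ → ℝ := fun y => Hfun f (curveOf f (gDeriv (f i) y))
  have hφ : Continuous φ :=
    (continuous_Hfun hf).comp ((continuous_curveOf hf).comp (Cm.continuous_gDeriv (hf i)))
  have hφγ : ∀ t, φ (curveOf f t i) = Hfun f (curveOf f t) := fun t => by
    simp only [φ, gDeriv_curveOf hf]
  refine le_antisymm (le_of_forall_gt_imp_ge_of_dense fun ε hε => ?_) (Hfun_nonneg hconj hk _)
  have hcl : curveOf f t₀ i ∈ closure {y | φ y ≤ ε} := Metric.mem_closure_iff.2 fun δ hδ => by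
    obtain ⟨t, ht⟩ := exists_Hfun_curveOf_lt hf hconj hk hm₂ i (curveOf f t₀ i)
      (lt_min hε (by positivity : 0 < δ ^ 2 / 2))
    have := Hfun_nonneg hconj hk (curveOf f t)
    have := sq_nonneg (curveOf f t₀ i - curveOf f t i)
    refine ⟨curveOf f t i, ?_, ?_⟩
    · simp only [Set.mem_ofPred_eq, hφγ]
      linarith [min_le_left ε (δ ^ 2 / 2)]
    · rw [Real.dist_eq]
      exact abs_lt_of_sq_lt_sq (by linarith [min_le_right ε (δ ^ 2 / 2)]) hδ.le
  rw [(isClosed_le hφ continuous_const).closure_eq] at hcl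
  exact hφγ t₀ ▸ hcl

theorem sCoord_curveOf (t : ℝ) : sCoord (curveOf f t) = t := by
  obtain ⟨t', ht'⟩ := surjective_sCoord_curveOf hf hk hm₂ t
  have hstar := Hfun_curveOf_add_le_Hfun hf (curveOf f t') t
  rw [Hfun_curveOf hf hconj hk hm₂, Hfun_curveOf hf hconj hk hm₂] at hstar
  simp only at ht'
  rw [ht'] at hstar
  nlinarith [sqDist_nonneg (curveOf f t') (curveOf f t)]

theorem sqDist_curveOf_le_two_mul_Hfun (x : Fin k → ℝ) :
    sqDist x (curveOf f (sCoord x)) ≤ 2 * Hfun f x := by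
  have hstar := Hfun_curveOf_add_le_Hfun hf x (sCoord x)
  rw [Hfun_curveOf hf hconj hk hm₂, sCoord_curveOf hf hconj hk hm₂] at hstar
  linarith

theorem eq_curveOf_of_Hfun_eq_zero {x : Fin k → ℝ} (hx : Hfun f x = 0) :
    x = curveOf f (sCoord x) :=
  eq_of_sqDist_le_zero (by linarith [sqDist_curveOf_le_two_mul_Hfun hf hconj hk hm₂ x])

theorem sqDist_curveOf_curveOf_le (t u : ℝ) : sqDist (curveOf f t) (curveOf f u) ≤ (u - t) ^ 2 :=
  calc sqDist (curveOf f t) (curveOf f u)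
      ≤ ∑ i, (u - t) * (curveOf f u i - curveOf f t i) :=
        Finset.sum_le_sum fun i _ => sq_curveOf_sub_le hf i t u
    _ = (u - t) ^ 2 := by
        rw [← Finset.mul_sum, Finset.sum_sub_distrib]
        change (u - t) * (sCoord (curveOf f u) - sCoord (curveOf f t)) = _
        rw [sCoord_curveOf hf hconj hk hm₂, sCoord_curveOf hf hconj hk hm₂]
        ring

theorem Hfun_add_le_of_Hfun_eq_zero {x : Fin k → ℝ} (hx : Hfun f x = 0) (r : Fin k → ℝ) :
    Hfun f (x + r) ≤ (m₂ + 1) / 2 * ∑ i, r i ^ 2 := by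
  have hx' := eq_curveOf_of_Hfun_eq_zero hf hconj hk hm₂ hx
  have hsum : ∑ i, (f i ((x + r) i) + (x + r) i ^ 2 / 2) - ∑ i, (f i (x i) + x i ^ 2 / 2) ≤
      sCoord x * sCoord r + (m₂ + 1) / 2 * ∑ i, r i ^ 2 := by
    rw [← Finset.sum_sub_distrib]
    calc _ ≤ ∑ i, (sCoord x * r i + (m₂ + 1) / 2 * r i ^ 2) := by
          refine Finset.sum_le_sum fun i _ => ?_
          have hg : gDeriv (f i) (x i) = sCoord x := by
            rw [congrFun hx' i]
            exact gDeriv_curveOf hf _ i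
          have := Cm.sub_le_gDeriv_mul_sub_add_sq (hf i) (x i + r i) (x i)
          rw [hg, add_sub_cancel_left] at this
          simp only [Pi.add_apply]
          linarith
      _ = _ := by rw [Finset.sum_add_distrib, ← Finset.mul_sum, ← Finset.mul_sum]; rfl
  rw [Hfun_eq] at hx ⊢
  rw [sCoord_add]
  nlinarith [sq_nonneg (sCoord r)]

theorem sqDist_add_curveOf_le_of_Hfun_eq_zero {x : Fin k → ℝ} (hx : Hfun f x = 0)
    (r : Fin k → ℝ) :
    sqDist (x + r) (curveOf f (sCoord (x + r))) ≤ (2 * k + 2) * ∑ i, r i ^ 2 := by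
  have hx' := eq_curveOf_of_Hfun_eq_zero hf hconj hk hm₂ hx
  have hcurve : sqDist x (curveOf f (sCoord (x + r))) ≤ sCoord r ^ 2 := by
    have := sqDist_curveOf_curveOf_le hf hconj hk hm₂ (sCoord x) (sCoord (x + r))
    rw [← hx'] at this
    calc _ ≤ (sCoord (x + r) - sCoord x) ^ 2 := this
      _ = sCoord r ^ 2 := by rw [sCoord_add, add_sub_cancel_left]
  have hcs : sCoord r ^ 2 ≤ k * ∑ i, r i ^ 2 := by
    have := sq_sum_le_card_mul_sum_sq (s := (Finset.univ : Finset (Fin k))) (f := r)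
    rwa [Finset.card_univ, Fintype.card_fin] at this
  calc sqDist (x + r) (curveOf f (sCoord (x + r)))
      ≤ 2 * sqDist x (x + r) + 2 * sqDist x (curveOf f (sCoord (x + r))) :=
        sqDist_le_two_mul_add_two_mul _ _ _
    _ ≤ (2 * k + 2) * ∑ i, r i ^ 2 := by rw [sqDist_self_add]; linarith

end Curve

theorem avg_sqDist_curveOf_le_of_empObj_le {k n : ℕ} {lam m₀ m₁ m₂ m₃ : ℝ} {f h : Fin k → ℝ → ℝ}
    (hk : 0 < k) (hlam : 0 ≤ lam) (hm₂ : 0 ≤ m₂) (hh : ∀ i, h i ∈ Cm m₀ m₁ m₂ m₃)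
    (hconjh : CConjugateTuple h) (Z : Fin n → Fin k → ℝ)
    (hmin : empObj n lam Z h ≤ empObj n lam Z f) :
    (n : ℝ)⁻¹ * ∑ m, sqDist (curveOf f (sCoord (Z m))) (curveOf h (sCoord (Z m))) ≤
      4 / (2 * lam + 1) * ((n : ℝ)⁻¹ * ∑ m, Hfun f (Z m)) +
        (8 * lam + 2) / (2 * lam + 1) *
          ((n : ℝ)⁻¹ * ∑ m, sqDist (Z m) (curveOf f (sCoord (Z m)))) := by
  set D := fun m => sqDist (curveOf f (sCoord (Z m))) (curveOf h (sCoord (Z m)))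
  set A := fun m => sqDist (Z m) (curveOf h (sCoord (Z m)))
  set B := fun m => sqDist (Z m) (curveOf f (sCoord (Z m)))
  have hmin' : (n : ℝ)⁻¹ * ∑ m, (Hfun h (Z m) + lam * A m) ≤
      (n : ℝ)⁻¹ * ∑ m, (Hfun f (Z m) + lam * B m) := hmin
  have hpt : ∀ m, (2 * lam + 1) * D m ≤ 4 * (Hfun h (Z m) + lam * A m) + (4 * lam + 2) * B m :=
    fun m => by
      have hD := sqDist_le_two_mul_add_two_mul (curveOf f (sCoord (Z m))) (Z m)
        (curveOf h (sCoord (Z m)))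
      have hA := sqDist_curveOf_le_two_mul_Hfun hh hconjh hk hm₂ (Z m)
      nlinarith
  have hsum := mul_le_mul_of_nonneg_left (Finset.sum_le_sum fun m (_ : m ∈ Finset.univ) => hpt m)
    (inv_nonneg.2 (n.cast_nonneg : (0 : ℝ) ≤ n))
  simp only [Finset.sum_add_distrib, ← Finset.mul_sum] at hsum hmin'
  rw [div_mul_eq_mul_div, div_mul_eq_mul_div, ← add_div, le_div_iff₀ (by positivity)]
  nlinarith

theorem integrable_avg_and_integral_avg_le {Ω E : Type*} [MeasurableSpace Ω] [MeasurableSpace E]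
    {μ : Measure Ω} {n : ℕ} (hn : 0 < n) {X : Fin n → Ω → E} {Y : Ω → E}
    (hXY : ∀ m, IdentDistrib (X m) Y μ μ) {ψ : E → ℝ} (hψ : Measurable ψ) {B : Ω → ℝ}
    (hB : Integrable B μ) {C : ℝ} (hψY : ∀ᵐ ω ∂μ, 0 ≤ ψ (Y ω) ∧ ψ (Y ω) ≤ C * B ω) :
    Integrable (fun ω => (n : ℝ)⁻¹ * ∑ m, ψ (X m ω)) μ ∧
      ∫ ω, (n : ℝ)⁻¹ * ∑ m, ψ (X m ω) ∂μ ≤ C * ∫ ω, B ω ∂μ := by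
  have hdist : ∀ m, IdentDistrib (ψ ∘ X m) (ψ ∘ Y) μ μ := fun m => (hXY m).comp hψ
  have hint : Integrable (ψ ∘ Y) μ :=
    (hB.const_mul C).mono' (hdist ⟨0, hn⟩).aemeasurable_snd.aestronglyMeasurable
      (hψY.mono fun ω h => by simpa [Real.norm_of_nonneg h.1] using h.2)
  have hintX : ∀ m, Integrable (fun ω => ψ (X m ω)) μ := fun m => (hdist m).integrable_iff.2 hint
  have heq : ∀ m, ∫ ω, ψ (X m ω) ∂μ = ∫ ω, ψ (Y ω) ∂μ := fun m => (hdist m).integral_eq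
  refine ⟨(integrable_finsetSum _ fun m _ => hintX m).const_mul _, ?_⟩
  calc ∫ ω, (n : ℝ)⁻¹ * ∑ m, ψ (X m ω) ∂μ = ∫ ω, ψ (Y ω) ∂μ := by
        rw [integral_const_mul, integral_finsetSum _ fun m _ => hintX m,
          Finset.sum_congr rfl fun m _ => heq m, Finset.sum_const, Finset.card_univ,
          Fintype.card_fin, nsmul_eq_mul, ← mul_assoc, inv_mul_cancel₀ (by positivity), one_mul]
    _ ≤ C * ∫ ω, B ω ∂μ := by
        rw [← integral_const_mul]
        exact integral_mono_ae hint (hB.const_mul C) (hψY.mono fun ω h => h.2)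

theorem expected_empirical_mse_bound_general
    (k n : ℕ) (hk : 2 ≤ k) (hn : 0 < n)
    (lam : ℝ) (hlam : 0 ≤ lam)
    (m₀ m₁ m₂ m₃ : ℝ) (hm₂ : 0 ≤ m₂)
    (f : Fin k → ℝ → ℝ) (hf : ∀ i, f i ∈ Cm m₀ m₁ m₂ m₃) (hconj : CConjugateTuple f)
    {Ω : Type*} [MeasurableSpace Ω] (μ : Measure Ω)
    (U R : Ω → Fin k → ℝ)
    (hUΓ : ∀ᵐ ω ∂μ, Hfun f (U ω) = 0)
    (hR2 : Integrable (fun ω => ∑ i, (R ω i) ^ 2) μ)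
    (X : Fin n → Ω → Fin k → ℝ)
    (hXdist : ∀ m, IdentDistrib (X m) (fun ω => U ω + R ω) μ μ)
    (fhat : Ω → Fin k → ℝ → ℝ)
    (hfhat : ∀ᵐ ω ∂μ,
      (∀ i, fhat ω i ∈ Cm m₀ m₁ m₂ m₃) ∧ CConjugateTuple (fhat ω) ∧
      ∀ h : Fin k → ℝ → ℝ, (∀ i, h i ∈ Cm m₀ m₁ m₂ m₃) → CConjugateTuple h →
        empObj n lam (fun m => X m ω) (fhat ω) ≤ empObj n lam (fun m => X m ω) h) :
    ∫ ω, (n : ℝ)⁻¹ * ∑ m : Fin n, ∑ i,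
        (curveOf f (sCoord (X m ω)) i - curveOf (fhat ω) (sCoord (X m ω)) i) ^ 2 ∂μ ≤
      ((16 * lam + 4) * k + 16 * lam + 2 * m₂ + 6) / (2 * lam + 1) *
        ∫ ω, ∑ i, (R ω i) ^ 2 ∂μ := by
  have hk₀ : 0 < k := by omega
  obtain ⟨hHint, hH⟩ := integrable_avg_and_integral_avg_le hn hXdist
    (continuous_Hfun hf).measurable hR2 (C := (m₂ + 1) / 2) (hUΓ.mono fun ω hω =>
      ⟨Hfun_nonneg hconj hk₀ _, Hfun_add_le_of_Hfun_eq_zero hf hconj hk₀ hm₂ hω (R ω)⟩)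
  obtain ⟨hBint, hB⟩ := integrable_avg_and_integral_avg_le hn hXdist
    (continuous_sqDist_curveOf hf).measurable hR2 (C := 2 * k + 2) (hUΓ.mono fun ω hω =>
      ⟨sqDist_nonneg _ _, sqDist_add_curveOf_le_of_Hfun_eq_zero hf hconj hk₀ hm₂ hω (R ω)⟩)
  refine (integral_mono_of_nonneg
    (ae_of_all _ fun ω => mul_nonneg (by positivity) (Finset.sum_nonneg fun _ _ => sqDist_nonneg _ _))
    ((hHint.const_mul _).add (hBint.const_mul _))
    (hfhat.mono fun ω ⟨hCm, hconjω, hmin⟩ =>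
      avg_sqDist_curveOf_le_of_empObj_le hk₀ hlam hm₂ hCm hconjω _ (hmin f hf hconj))).trans ?_
  rw [integral_add' (hHint.const_mul _) (hBint.const_mul _),
    integral_const_mul (4 / (2 * lam + 1)), integral_const_mul ((8 * lam + 2) / (2 * lam + 1))]
  calc _ ≤ 4 / (2 * lam + 1) * ((m₂ + 1) / 2 * ∫ ω, ∑ i, R ω i ^ 2 ∂μ) +
        (8 * lam + 2) / (2 * lam + 1) * ((2 * k + 2) * ∫ ω, ∑ i, R ω i ^ 2 ∂μ) := by gcongr
    _ = _ := by field_simp; ring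

/-- (Expected empirical MSE bound.) For the population model
`X = U + R` with `U ∈ Γ = {H(·; f) = 0}` a.s. and centered noise `R`, and `f̂` a random
`c`-conjugate empirical minimizer over `(𝒞_m)^k`, the expected empirical mean squared
error of the curve estimate is at most
`((16λ + 4)k + 16λ + 2m₂ + 6)/(2λ + 1) · E‖R‖²`. -/
theorem expected_empirical_mse_bound
    (k n : ℕ) (hk : 2 ≤ k) (hn : 0 < n)
    (lam : ℝ) (hlam : 0 ≤ lam)
    (m₀ m₁ m₂ m₃ : ℝ) (hm₀ : 0 ≤ m₀) (hm₁ : 0 ≤ m₁) (hm₂ : 0 ≤ m₂) (hm₃ : 0 ≤ m₃)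
    (f : Fin k → ℝ → ℝ) (hf : ∀ i, f i ∈ Cm m₀ m₁ m₂ m₃) (hconj : CConjugateTuple f)
    {Ω : Type*} [MeasurableSpace Ω] (μ : Measure Ω) [IsProbabilityMeasure μ]
    (U R : Ω → Fin k → ℝ)
    (hUmeas : Measurable U) (hRmeas : Measurable R)
    (hindep : IndepFun U R μ)
    (hUΓ : ∀ᵐ ω ∂μ, Hfun f (U ω) = 0)
    (hRint : ∀ i, Integrable (fun ω => R ω i) μ)
    (hRmean : ∀ i, ∫ ω, R ω i ∂μ = 0)
    (hX2 : Integrable (fun ω => ∑ i, (U ω i + R ω i) ^ 2) μ)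
    (hR2 : Integrable (fun ω => ∑ i, (R ω i) ^ 2) μ)
    (X : Fin n → Ω → Fin k → ℝ)
    (hXmeas : ∀ m, Measurable (X m))
    (hXindep : iIndepFun X μ)
    (hXdist : ∀ m, IdentDistrib (X m) (fun ω => U ω + R ω) μ μ)
    (fhat : Ω → Fin k → ℝ → ℝ)
    (hfhat : ∀ᵐ ω ∂μ,
      (∀ i, fhat ω i ∈ Cm m₀ m₁ m₂ m₃) ∧ CConjugateTuple (fhat ω) ∧
      ∀ h : Fin k → ℝ → ℝ, (∀ i, h i ∈ Cm m₀ m₁ m₂ m₃) → CConjugateTuple h →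
        empObj n lam (fun m => X m ω) (fhat ω) ≤ empObj n lam (fun m => X m ω) h)
    (hMSEint : Integrable (fun ω => (n : ℝ)⁻¹ * ∑ m : Fin n, ∑ i,
      (curveOf f (sCoord (X m ω)) i - curveOf (fhat ω) (sCoord (X m ω)) i) ^ 2) μ) :
    ∫ ω, (n : ℝ)⁻¹ * ∑ m : Fin n, ∑ i,
        (curveOf f (sCoord (X m ω)) i - curveOf (fhat ω) (sCoord (X m ω)) i) ^ 2 ∂μ ≤
      ((16 * lam + 4) * k + 16 * lam + 2 * m₂ + 6) / (2 * lam + 1) *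
        ∫ ω, ∑ i, (R ω i) ^ 2 ∂μ :=
  expected_empirical_mse_bound_general k n hk hn lam hlam m₀ m₁ m₂ m₃ hm₂ f hf hconj μ U R hUΓ hR2 X
    hXdist fhat hfhat
end
end
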